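/- Let ρ be positive semidefinite, P a projection with Image(P) contained in an appropriate subspace such that ker(ρ^{-1} # σ) ⊆ ker(ρ^{-1/2} P ρ P ρ^{-1/2}), κ = ‖ρ^{-1/2} P ρ^{1/2}‖_∞², and η the smallest nonzero eigenvalue of ρ^{-1} # σ, where P projects onto Image(ρ^{1/2} σ ρ^{1/2}). Then P ρ P ≤ (κ/η) · ρ^{1/2}(ρ^{-1} # σ)ρ^{1/2} in the Loewner order. -/

import Mathlib

open Matrix Kronecker
open scoped ComplexOrder

noncomputable section
attribute [local instance] Classical.propDecidable

/-- Moore–Penrose pseudoinverse of a square complex matrix. -/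
def pinv {n : Type*} [Fintype n] [DecidableEq n] (A : Matrix n n ℂ) : Matrix n n ℂ :=
  if h : ∃ B : Matrix n n ℂ,
      A * B * A = A ∧ B * A * B = B ∧ (A * B)ᴴ = A * B ∧ (B * A)ᴴ = B * A
  then h.choose else 0

/-- Positive semidefinite square root (junk value `0` if the matrix is not PSD). -/
def msqrt {n : Type*} [Fintype n] [DecidableEq n] (A : Matrix n n ℂ) : Matrix n n ℂ :=
  if h : A.PosSemidef then
    h.1.eigenvectorUnitary.1 * diagonal ((↑) ∘ (√·) ∘ h.1.eigenvalues) *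
      (star h.1.eigenvectorUnitary : Matrix n n ℂ)
  else 0

/-- `sgn(X) = U sgn(Σ) V*` for an SVD `X = U Σ V*`; equivalently `X (X* X)^{-1/2}`
with the Moore–Penrose pseudoinverse. -/
def msgn {n : Type*} [Fintype n] [DecidableEq n] (X : Matrix n n ℂ) : Matrix n n ℂ :=
  X * pinv (msqrt (Xᴴ * X))

/-- Matrix geometric mean `A # B = A^{1/2} (A^{-1/2} B A^{-1/2})^{1/2} A^{1/2}`
(with Moore–Penrose pseudoinverses). -/
def geo {n : Type*} [Fintype n] [DecidableEq n] (A B : Matrix n n ℂ) : Matrix n n ℂ :=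
  msqrt A * msqrt (pinv (msqrt A) * B * pinv (msqrt A)) * msqrt A

/-- The unnormalized maximally entangled state `|Ω⟩ = ∑ i, |i⟩ ⊗ |i⟩`. -/
def omegaVec (d : ℕ) : Fin d × Fin d → ℂ := fun p => if p.1 = p.2 then 1 else 0

/-- Reduced density matrix of `|C⟩⟨C|` on the first subsystem
(partial trace over the second subsystem). -/
def reducedA {d : ℕ} (C : Fin d × Fin d → ℂ) : Matrix (Fin d) (Fin d) ℂ :=
  Matrix.of fun i j => ∑ k, C (i, k) * star (C (j, k))

/-- Partial trace over the first subsystem of the operator `|D⟩⟨C|`. -/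
def trA {d : ℕ} (D C : Fin d × Fin d → ℂ) : Matrix (Fin d) (Fin d) ℂ :=
  Matrix.of fun j l => ∑ i, D (i, j) * star (C (i, l))

/-- `ℓ²→ℓ²` operator norm (largest singular value). -/
def opNorm {n : Type*} [Fintype n] [DecidableEq n] (A : Matrix n n ℂ) : ℝ :=
  ‖(Matrix.toEuclideanCLM (𝕜 := ℂ) A : EuclideanSpace ℂ n →L[ℂ] EuclideanSpace ℂ n)‖

/-- `P` is the orthogonal projection onto the image (column space) of `A`. -/
def IsOrthProjOnto {n : Type*} [Fintype n] [DecidableEq n] (P A : Matrix n n ℂ) : Prop :=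
  Pᴴ = P ∧ P * P = P ∧ LinearMap.range P.mulVecLin = LinearMap.range A.mulVecLin

/-- `η` is the smallest nonzero eigenvalue of the Hermitian matrix `M`. -/
def IsSmallestNonzeroEigenvalue {n : Type*} [Fintype n] [DecidableEq n]
    (M : Matrix n n ℂ) (η : ℝ) : Prop :=
  ∃ hM : M.IsHermitian, η ≠ 0 ∧ (∃ i, hM.eigenvalues i = η) ∧
    ∀ i, hM.eigenvalues i ≠ 0 → η ≤ hM.eigenvalues i

/-!
Write `S = ρ^{1/2}`, `G = ρ^{-1} # σ` and `X = S⁻¹ P S` (pseudoinverses throughout), so that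
`X X* = S⁻¹ P ρ P S⁻¹` and `X X* ≤ κ`. If `Q` is the projection onto the range of `G`, the kernel
hypothesis gives `X X* = Q X X* Q ≤ κ Q`, and the spectral gap of `G` gives `κ Q ≤ (κ / η) G`.
Since the image of `P` lies in that of `S`, we have `S S⁻¹ P = P`, so conjugating
`X X* ≤ (κ / η) G` by `S` yields `P ρ P ≤ (κ / η) S G S`.
-/

open scoped MatrixOrder Matrix.Norms.L2Operator

def IsMoorePenroseInverse {R : Type*} [Mul R] [Star R] (a b : R) : Prop :=
  a * b * a = a ∧ b * a * b = b ∧ IsSelfAdjoint (a * b) ∧ IsSelfAdjoint (b * a)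

theorem IsMoorePenroseInverse.unique {R : Type*} [Semigroup R] [StarMul R] {a b c : R}
    (hb : IsMoorePenroseInverse a b) (hc : IsMoorePenroseInverse a c) : b = c := by
  obtain ⟨hb₁, hb₂, hb₃, hb₄⟩ := hb
  obtain ⟨hc₁, hc₂, hc₃, hc₄⟩ := hc
  have hab : a * b = a * c :=
    calc a * b = star (a * c * a * b) := by rw [hc₁, hb₃.star_eq]
      _ = star (a * b) * star (a * c) := by simp only [star_mul, mul_assoc]
      _ = a * b * a * c := by rw [hb₃.star_eq, hc₃.star_eq]; simp only [mul_assoc]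
      _ = a * c := by rw [hb₁]
  have hba : b * a = c * a :=
    calc b * a = star (b * (a * c * a)) := by rw [hc₁, hb₄.star_eq]
      _ = star (c * a) * star (b * a) := by simp only [star_mul, mul_assoc]
      _ = c * (a * b * a) := by rw [hb₄.star_eq, hc₄.star_eq]; simp only [mul_assoc]
      _ = c * a := by rw [hb₁]
  calc b = b * a * b := hb₂.symm
    _ = c * a * c := by rw [hba, mul_assoc, hab, ← mul_assoc]
    _ = c := hc₂

section

variable {n : Type*} [Fintype n] [DecidableEq n]

namespace Matrix

variable {𝕜 : Type*} [RCLike 𝕜]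

theorem cfc_mul' (A : Matrix n n 𝕜) (f g : ℝ → ℝ) :
    cfc (fun t => f t * g t) A = cfc f A * cfc g A :=
  cfc_mul f g A (A.finite_real_spectrum.continuousOn f) (A.finite_real_spectrum.continuousOn g)

theorem isMoorePenroseInverse_cfc_inv {A : Matrix n n 𝕜} (hA : IsSelfAdjoint A) :
    IsMoorePenroseInverse A (cfc (·⁻¹ : ℝ → ℝ) A) := by
  refine ⟨?_, ?_, ?_, ?_⟩
  · calc A * cfc (·⁻¹) A * A = cfc (fun t : ℝ => t * t⁻¹ * t) A := by
          rw [cfc_mul', cfc_mul', cfc_id' ℝ A]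
      _ = A := by simp only [mul_inv_mul_cancel, cfc_id' ℝ A]
  · calc cfc (·⁻¹) A * A * cfc (·⁻¹) A = cfc (fun t : ℝ => t⁻¹ * t * t⁻¹) A := by
          rw [cfc_mul', cfc_mul', cfc_id' ℝ A]
      _ = cfc (·⁻¹) A := by congr 1; funext t; simpa using mul_inv_mul_cancel t⁻¹
  · simpa only [cfc_mul', cfc_id' ℝ A] using cfc_predicate (fun t : ℝ => t * t⁻¹) A
  · simpa only [cfc_mul', cfc_id' ℝ A] using cfc_predicate (fun t : ℝ => t⁻¹ * t) A

theorem mul_eq_zero_of_ker_le {R : Type*} [CommRing R] {A B C : Matrix n n R}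
    (hker : LinearMap.ker A.mulVecLin ≤ LinearMap.ker B.mulVecLin) (hAC : A * C = 0) :
    B * C = 0 :=
  ext_of_mulVec_single fun i => by
    have hCi : C *ᵥ Pi.single i 1 ∈ LinearMap.ker A.mulVecLin := by
      rw [LinearMap.mem_ker, mulVecLin_apply, mulVec_mulVec, hAC, zero_mulVec]
    simpa only [← mulVec_mulVec, zero_mulVec, LinearMap.mem_ker, mulVecLin_apply] using hker hCi

theorem mul_eq_self_of_range_le {R : Type*} [CommRing R] {E A P : Matrix n n R}
    (hEA : E * A = A) (hPA : LinearMap.range P.mulVecLin ≤ LinearMap.range A.mulVecLin) :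
    E * P = P :=
  ext_of_mulVec_single fun i => by
    obtain ⟨v, hv⟩ := hPA ⟨Pi.single i 1, rfl⟩
    simp only [mulVecLin_apply] at hv
    rw [← mulVec_mulVec, ← hv, mulVec_mulVec, hEA]

theorem le_smul_of_ker_le_of_spectral_gap {G N : Matrix n n 𝕜} (hG : IsSelfAdjoint G)
    {η κ : ℝ} (hη : 0 < η) (hκ : 0 ≤ κ) (hgap : ∀ t ∈ spectrum ℝ G, t ≠ 0 → η ≤ t)
    (hker : LinearMap.ker G.mulVecLin ≤ LinearMap.ker N.mulVecLin) (hN : IsSelfAdjoint N)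
    (hNκ : N ≤ κ • 1) : N ≤ (κ / η) • G := by
  -- the projection onto the range of `G`, because `0⁻¹ = 0`
  set Q := cfc (fun t : ℝ => t * t⁻¹) G with hQ
  have hQ_sa : IsSelfAdjoint Q := cfc_predicate _ G
  have hQQ : Q * Q = Q := by
    rw [hQ, ← cfc_mul']
    congr 1; funext t
    rcases eq_or_ne t 0 with rfl | ht <;> simp [*]
  have hGQ : G * Q = G :=
    calc G * Q = cfc (fun t : ℝ => t * (t * t⁻¹)) G := by rw [cfc_mul', cfc_id' ℝ G]
      _ = G := by simp only [← mul_assoc, mul_self_mul_inv, cfc_id' ℝ G]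
  have hNQ : N * Q = N := by
    have := mul_eq_zero_of_ker_le hker (C := 1 - Q) (by rw [mul_sub, mul_one, hGQ, sub_self])
    rwa [mul_sub, mul_one, sub_eq_zero, eq_comm] at this
  have hQN : Q * N = N := by
    simpa only [star_mul, hN.star_eq, hQ_sa.star_eq] using congrArg star hNQ
  calc N = star Q * N * Q := by rw [hQ_sa.star_eq, hQN, hNQ]
    _ ≤ star Q * (κ • 1) * Q := star_left_conjugate_le_conjugate hNκ Q
    _ = cfc (fun t : ℝ => κ * (t * t⁻¹)) G := by
      rw [cfc_const_mul _ _ G (G.finite_real_spectrum.continuousOn _), hQ_sa.star_eq,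
        mul_smul_comm, mul_one, smul_mul_assoc, hQQ]
    _ ≤ cfc (fun t : ℝ => κ / η * t) G := by
      refine cfc_mono (fun t ht => ?_) (G.finite_real_spectrum.continuousOn _)
      rcases eq_or_ne t 0 with rfl | ht0
      · simp
      · rw [mul_inv_cancel₀ ht0, mul_one, div_mul_eq_mul_div, le_div_iff₀ hη]
        exact mul_le_mul_of_nonneg_left (hgap t ht ht0) hκ
    _ = (κ / η) • G := cfc_const_mul_id _ G

end Matrix

theorem IsMoorePenroseInverse.pinv_eq {A B : Matrix n n ℂ} (h : IsMoorePenroseInverse A B) :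
    pinv A = B := by
  rw [pinv, dif_pos ⟨B, h⟩]
  exact (Exists.choose_spec (p := fun B => IsMoorePenroseInverse A B) ⟨B, h⟩).unique h

theorem pinv_eq_cfc_inv {A : Matrix n n ℂ} (hA : IsSelfAdjoint A) :
    pinv A = cfc (·⁻¹ : ℝ → ℝ) A :=
  (Matrix.isMoorePenroseInverse_cfc_inv hA).pinv_eq

theorem isMoorePenroseInverse_pinv {A : Matrix n n ℂ} (hA : IsSelfAdjoint A) :
    IsMoorePenroseInverse A (pinv A) :=
  pinv_eq_cfc_inv hA ▸ Matrix.isMoorePenroseInverse_cfc_inv hA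

theorem isSelfAdjoint_pinv {A : Matrix n n ℂ} (hA : IsSelfAdjoint A) : IsSelfAdjoint (pinv A) :=
  pinv_eq_cfc_inv hA ▸ cfc_predicate _ A

theorem msqrt_eq_sqrt {A : Matrix n n ℂ} (hA : A.PosSemidef) : msqrt A = CFC.sqrt A := by
  rw [msqrt, dif_pos hA, CFC.sqrt_eq_real_sqrt A hA.nonneg, cfcₙ_eq_cfc, hA.1.cfc_eq,
    Matrix.IsHermitian.cfc, Unitary.conjStarAlgAut_apply]
  rfl

theorem msqrt_nonneg (A : Matrix n n ℂ) : 0 ≤ msqrt A := by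
  by_cases hA : A.PosSemidef
  · rw [msqrt_eq_sqrt hA]
    exact CFC.sqrt_nonneg A
  · rw [msqrt, dif_neg hA]

theorem msqrt_mul_self {A : Matrix n n ℂ} (hA : A.PosSemidef) : msqrt A * msqrt A = A := by
  rw [msqrt_eq_sqrt hA]
  exact CFC.sqrt_mul_sqrt_self A hA.nonneg

theorem geo_nonneg (A B : Matrix n n ℂ) : 0 ≤ geo A B := by
  unfold geo
  exact (IsSelfAdjoint.of_nonneg (msqrt_nonneg A)).conjugate_nonneg
    (msqrt_nonneg (pinv (msqrt A) * B * pinv (msqrt A)))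

-- `opNorm X` is by definition the C⋆-norm `‖X‖` of the scoped `L2Operator` instances.
theorem mul_conjTranspose_le_opNorm_sq_smul_one (X : Matrix n n ℂ) :
    X * Xᴴ ≤ opNorm X ^ 2 • (1 : Matrix n n ℂ) := by
  have := CStarAlgebra.mul_star_le_algebraMap_norm_sq (a := X)
  rwa [Algebra.algebraMap_eq_smul_one] at this

theorem IsSmallestNonzeroEigenvalue.pos {M : Matrix n n ℂ} {η : ℝ}
    (h : IsSmallestNonzeroEigenvalue M η) (hM : 0 ≤ M) : 0 < η := by
  obtain ⟨hM', hη, ⟨i, rfl⟩, -⟩ := h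
  exact lt_of_le_of_ne ((Matrix.nonneg_iff_posSemidef.mp hM).eigenvalues_nonneg i) hη.symm

theorem IsSmallestNonzeroEigenvalue.le_of_mem_spectrum {M : Matrix n n ℂ} {η : ℝ}
    (h : IsSmallestNonzeroEigenvalue M η) {t : ℝ} (ht : t ∈ spectrum ℝ M) (ht0 : t ≠ 0) :
    η ≤ t := by
  obtain ⟨hM, -, -, hmin⟩ := h
  obtain ⟨i, rfl⟩ := hM.spectrum_real_eq_range_eigenvalues ▸ ht
  exact hmin i ht0

end

theorem obliqueness_spectral_gap_bound_general {n : Type*} [Fintype n] [DecidableEq n]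
    (ρ σ P : Matrix n n ℂ) (hρ : ρ.PosSemidef)
    (hP : IsOrthProjOnto P (msqrt ρ * σ * msqrt ρ))
    (hker : LinearMap.ker (geo (pinv ρ) σ).mulVecLin ≤
      LinearMap.ker (pinv (msqrt ρ) * P * ρ * P * pinv (msqrt ρ)).mulVecLin)
    (κ η : ℝ)
    (hκ : κ = (opNorm (pinv (msqrt ρ) * P * msqrt ρ)) ^ 2)
    (hη : IsSmallestNonzeroEigenvalue (geo (pinv ρ) σ) η) :
    (((κ / η : ℝ) : ℂ) • (msqrt ρ * geo (pinv ρ) σ * msqrt ρ)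
        - P * ρ * P).PosSemidef := by
  obtain ⟨hP_sa, -, hP_range⟩ := hP
  set S := msqrt ρ
  set R := pinv S
  set X := R * P * S
  have hS : IsSelfAdjoint S := .of_nonneg (msqrt_nonneg ρ)
  have hR : IsSelfAdjoint R := isSelfAdjoint_pinv hS
  have hSS : S * S = ρ := msqrt_mul_self hρ
  have hSRP : S * R * P = P := by
    refine Matrix.mul_eq_self_of_range_le (A := S * σ * S) ?_ hP_range.le
    rw [← mul_assoc, ← mul_assoc, (isMoorePenroseInverse_pinv hS).1]
  have hPRS : P * R * S = P := by
    simpa only [star_mul, hS.star_eq, hR.star_eq, Matrix.star_eq_conjTranspose, hP_sa,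
      mul_assoc] using congrArg star hSRP
  have hXX : X * Xᴴ = R * P * ρ * P * R := by
    simp only [X, ← Matrix.star_eq_conjTranspose, star_mul, hS.star_eq, hR.star_eq]
    rw [Matrix.star_eq_conjTranspose, hP_sa, ← hSS]
    simp only [mul_assoc]
  have hG := geo_nonneg (pinv ρ) σ
  have hbound : X * Xᴴ ≤ (κ / η) • geo (pinv ρ) σ :=
    Matrix.le_smul_of_ker_le_of_spectral_gap hG.isSelfAdjoint (hη.pos hG) (hκ ▸ sq_nonneg _)
      (fun _ => hη.le_of_mem_spectrum) (hXX ▸ hker)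
      (IsSelfAdjoint.mul_star_self X) (hκ ▸ mul_conjTranspose_le_opNorm_sq_smul_one X)
  rw [← Matrix.le_iff, Complex.coe_smul]
  calc P * ρ * P = S * R * P * ρ * (P * R * S) := by rw [hSRP, hPRS]
    _ = star S * (X * Xᴴ) * S := by rw [hXX, hS.star_eq]; simp only [mul_assoc]
    _ ≤ star S * ((κ / η) • geo (pinv ρ) σ) * S := star_left_conjugate_le_conjugate hbound S
    _ = (κ / η) • (S * geo (pinv ρ) σ * S) := by
        rw [hS.star_eq, mul_smul_comm, smul_mul_assoc]

theorem obliqueness_spectral_gap_bound {n : Type*} [Fintype n] [DecidableEq n]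
    (ρ σ P : Matrix n n ℂ) (hρ : ρ.PosSemidef) (hσ : σ.PosSemidef)
    (hP : IsOrthProjOnto P (msqrt ρ * σ * msqrt ρ))
    (hker : LinearMap.ker (geo (pinv ρ) σ).mulVecLin ≤
      LinearMap.ker (pinv (msqrt ρ) * P * ρ * P * pinv (msqrt ρ)).mulVecLin)
    (κ η : ℝ)
    (hκ : κ = (opNorm (pinv (msqrt ρ) * P * msqrt ρ)) ^ 2)
    (hη : IsSmallestNonzeroEigenvalue (geo (pinv ρ) σ) η) :
    (((κ / η : ℝ) : ℂ) • (msqrt ρ * geo (pinv ρ) σ * msqrt ρ)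
        - P * ρ * P).PosSemidef :=
  obliqueness_spectral_gap_bound_general ρ σ P hρ hP hker κ η hκ hη
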